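/- Let n ≥ 2 be an integer and define P_n(r,t) = t^{−n/2} exp(−(n−1)² t/4 − r²/(4t) − (n−1)r/2) · (1+r+t)^{(n−3)/2} · (1+r) for r, t > 0. Then there exists a constant C > 0 (depending only on n) such that C^{-1} ≤ ∫₁^∞ P_n(r,t)/t dt ≤ C for all 0 < r ≤ 1. -/

import Mathlib

/-!
For `0 ≤ r ≤ 1` and `t ≥ 1` the integrand `P_n(r, t) / t` is at most `c_n e^{-t/4}`: the factor
`(1 + r + t)^{(n-3)/2} ≤ (3t)^β`, `β = max((n-3)/2, 0)`, is absorbed by `e^{-(n-1)² t/4}`, since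
`β ≤ ((n-1)² - 1)/4` for `n ≥ 2`. By dominated convergence `K₂` is therefore continuous on
`[0, 1]`; it is positive there because the integrand is, so on this compact interval it is
bounded above and away from `0`.
-/

open MeasureTheory Real Set

lemma rpow_le_exp_mul {t β : ℝ} (ht : 0 ≤ t) (hβ : 0 ≤ β) : t ^ β ≤ exp (t * β) := by
  rw [exp_mul]
  exact rpow_le_rpow ht ((le_add_of_nonneg_right zero_le_one).trans (add_one_le_exp t)) hβ

lemma one_add_add_rpow_le {r t a : ℝ} (hr0 : 0 ≤ r) (hr1 : r ≤ 1) (ht : 1 ≤ t) :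
    (1 + r + t) ^ a ≤ 3 ^ max a 0 * t ^ max a 0 := by
  rcases le_total 0 a with ha | ha
  · rw [max_eq_left ha, ← mul_rpow zero_le_three (by linarith)]
    exact rpow_le_rpow (by positivity) (by linarith) ha
  · rw [max_eq_right ha, rpow_zero, rpow_zero, one_mul]
    exact rpow_le_one_of_one_le_of_nonpos (by linarith) ha

lemma max_sub_three_div_two_le {n : ℕ} (hn : 2 ≤ n) :
    max (((n : ℝ) - 3) / 2) 0 ≤ ((n : ℝ) - 1) ^ 2 / 4 - 1 / 4 := by
  have hn' : (2 : ℝ) ≤ n := by exact_mod_cast hn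
  apply max_le <;> nlinarith [sq_nonneg ((n : ℝ) - 2)]

noncomputable def daviesMandouvalos (n : ℕ) (r t : ℝ) : ℝ :=
  t ^ (-(n : ℝ) / 2) * exp (-(((n : ℝ) - 1) ^ 2 * t / 4) - r ^ 2 / (4 * t) - ((n : ℝ) - 1) * r / 2)
    * (1 + r + t) ^ (((n : ℝ) - 3) / 2) * (1 + r)

noncomputable def longTimeLogKernel (n : ℕ) (r : ℝ) : ℝ :=
  ∫ t in Ioi 1, daviesMandouvalos n r t / t

lemma daviesMandouvalos_pos (n : ℕ) {r t : ℝ} (hr : 0 ≤ r) (ht : 0 < t) :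
    0 < daviesMandouvalos n r t := by
  unfold daviesMandouvalos; positivity

lemma measurable_daviesMandouvalos_div (n : ℕ) (r : ℝ) :
    Measurable fun t => daviesMandouvalos n r t / t := by
  unfold daviesMandouvalos; fun_prop

lemma continuousOn_daviesMandouvalos_div (n : ℕ) {t : ℝ} (ht : 0 < t) :
    ContinuousOn (fun r => daviesMandouvalos n r t / t) (Ici 0) := by
  unfold daviesMandouvalos
  refine ((ContinuousOn.mul (by fun_prop) ?_).mul (by fun_prop)).div_const _
  exact ContinuousOn.rpow_const (by fun_prop) fun r hr => Or.inl (by simp at hr; positivity)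

lemma daviesMandouvalos_div_le {n : ℕ} (hn : 2 ≤ n) {r t : ℝ} (hr0 : 0 ≤ r) (hr1 : r ≤ 1)
    (ht : 1 ≤ t) :
    daviesMandouvalos n r t / t ≤ 2 * 3 ^ max (((n : ℝ) - 3) / 2) 0 * exp (-(1 / 4) * t) := by
  set β := max (((n : ℝ) - 3) / 2) 0
  have hn' : (1 : ℝ) ≤ n := by exact_mod_cast one_le_two.trans hn
  have ht0 : 0 < t := zero_lt_one.trans_le ht
  have hpow : t ^ (-(n : ℝ) / 2) ≤ 1 :=
    rpow_le_one_of_one_le_of_nonpos ht (by rw [neg_div]; exact neg_nonpos.2 (by positivity))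
  have hexp : exp (-(((n : ℝ) - 1) ^ 2 * t / 4) - r ^ 2 / (4 * t) - ((n : ℝ) - 1) * r / 2)
      ≤ exp (-(((n : ℝ) - 1) ^ 2 * t / 4)) := by
    gcongr
    have : 0 ≤ ((n : ℝ) - 1) * r / 2 := div_nonneg (mul_nonneg (by linarith) hr0) zero_le_two
    have : 0 ≤ r ^ 2 / (4 * t) := by positivity
    linarith
  have hdecay : t * β - ((n : ℝ) - 1) ^ 2 * t / 4 ≤ -(1 / 4) * t := by
    nlinarith [max_sub_three_div_two_le hn]
  calc daviesMandouvalos n r t / t ≤ daviesMandouvalos n r t :=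
        div_le_self (daviesMandouvalos_pos n hr0 ht0).le ht
    _ ≤ 1 * exp (-(((n : ℝ) - 1) ^ 2 * t / 4)) * (3 ^ β * t ^ β) * 2 := by
        unfold daviesMandouvalos
        gcongr
        · exact one_add_add_rpow_le hr0 hr1 ht
        · linarith
    _ = 2 * 3 ^ β * (t ^ β * exp (-(((n : ℝ) - 1) ^ 2 * t / 4))) := by ring
    _ ≤ 2 * 3 ^ β * (exp (t * β) * exp (-(((n : ℝ) - 1) ^ 2 * t / 4))) := by
        gcongr
        exact rpow_le_exp_mul ht0.le (le_max_right _ _)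
    _ ≤ 2 * 3 ^ β * exp (-(1 / 4) * t) := by
        rw [← exp_add]
        gcongr
        linarith

lemma ae_norm_daviesMandouvalos_div_le {n : ℕ} (hn : 2 ≤ n) {r : ℝ} (hr0 : 0 ≤ r)
    (hr1 : r ≤ 1) : ∀ᵐ t ∂volume.restrict (Ioi 1),
      ‖daviesMandouvalos n r t / t‖ ≤ 2 * 3 ^ max (((n : ℝ) - 3) / 2) 0 * exp (-(1 / 4) * t) := by
  filter_upwards [ae_restrict_mem measurableSet_Ioi] with t (ht : 1 < t)
  have ht0 : (0 : ℝ) < t := zero_lt_one.trans ht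
  rw [norm_of_nonneg (div_pos (daviesMandouvalos_pos n hr0 ht0) ht0).le]
  exact daviesMandouvalos_div_le hn hr0 hr1 ht.le

lemma integrableOn_daviesMandouvalos_div {n : ℕ} (hn : 2 ≤ n) {r : ℝ} (hr0 : 0 ≤ r)
    (hr1 : r ≤ 1) : IntegrableOn (fun t => daviesMandouvalos n r t / t) (Ioi 1) := by
  refine Integrable.mono'
    ((exp_neg_integrableOn_Ioi 1 (by norm_num : (0 : ℝ) < 1 / 4)).const_mul _)
    (measurable_daviesMandouvalos_div n r).aestronglyMeasurable
    (ae_norm_daviesMandouvalos_div_le hn hr0 hr1)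

lemma continuousOn_longTimeLogKernel {n : ℕ} (hn : 2 ≤ n) :
    ContinuousOn (longTimeLogKernel n) (Icc 0 1) := by
  refine continuousOn_of_dominated
    (fun r _ => (measurable_daviesMandouvalos_div n r).aestronglyMeasurable)
    (fun r hr => ae_norm_daviesMandouvalos_div_le hn hr.1 hr.2)
    ((exp_neg_integrableOn_Ioi 1 (by norm_num : (0 : ℝ) < 1 / 4)).const_mul _) ?_
  filter_upwards [ae_restrict_mem measurableSet_Ioi] with t ht
  exact (continuousOn_daviesMandouvalos_div n (zero_lt_one.trans ht)).mono fun r hr => hr.1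

lemma longTimeLogKernel_pos {n : ℕ} (hn : 2 ≤ n) {r : ℝ} (hr0 : 0 ≤ r) (hr1 : r ≤ 1) :
    0 < longTimeLogKernel n r := by
  have hpos : ∀ t ∈ Ioi (1 : ℝ), 0 < daviesMandouvalos n r t / t := fun t ht =>
    have ht0 : (0 : ℝ) < t := zero_lt_one.trans ht
    div_pos (daviesMandouvalos_pos n hr0 ht0) ht0
  rw [longTimeLogKernel, setIntegral_pos_iff_support_of_nonneg_ae
    ((ae_restrict_mem measurableSet_Ioi).mono fun t ht => (hpos t ht).le)
    (integrableOn_daviesMandouvalos_div hn hr0 hr1),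
    inter_eq_right.2 fun t ht => Function.mem_support.2 (hpos t ht).ne', volume_Ioi]
  exact ENNReal.zero_lt_top

/-- Small-`r` asymptotics of the long-time logarithmic kernel `K₂(r) = ∫₁^∞ P_n(r,t)/t dt`
built from the Davies–Mandouvalos comparison function: there is `C > 0` with
`C⁻¹ ≤ K₂(r) ≤ C` for all `0 < r ≤ 1`. -/
theorem log_kernel_K2_asymp_small (n : ℕ) (hn : 2 ≤ n) :
    ∃ C : ℝ, 0 < C ∧ ∀ r : ℝ, 0 < r → r ≤ 1 →
      (C⁻¹ ≤
        ∫ t in Set.Ioi (1 : ℝ),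
          (t ^ (-(n : ℝ)/2) *
            Real.exp (-(((n : ℝ) - 1)^2 * t / 4) - r^2 / (4 * t) - ((n : ℝ) - 1) * r / 2) *
            (1 + r + t) ^ (((n : ℝ) - 3)/2) * (1 + r)) / t) ∧
      ((∫ t in Set.Ioi (1 : ℝ),
          (t ^ (-(n : ℝ)/2) *
            Real.exp (-(((n : ℝ) - 1)^2 * t / 4) - r^2 / (4 * t) - ((n : ℝ) - 1) * r / 2) *
            (1 + r + t) ^ (((n : ℝ) - 3)/2) * (1 + r)) / t) ≤ C) := by
  obtain ⟨r₀, hr₀, hmin⟩ :=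
    isCompact_Icc.exists_isMinOn (nonempty_Icc.2 zero_le_one) (continuousOn_longTimeLogKernel hn)
  obtain ⟨r₁, -, hmax⟩ :=
    isCompact_Icc.exists_isMaxOn (nonempty_Icc.2 zero_le_one) (continuousOn_longTimeLogKernel hn)
  have hK₀ : 0 < longTimeLogKernel n r₀ := longTimeLogKernel_pos hn hr₀.1 hr₀.2
  refine ⟨max (longTimeLogKernel n r₁) (longTimeLogKernel n r₀)⁻¹,
    (inv_pos.2 hK₀).trans_le (le_max_right _ _), fun r hr hr1 => ⟨?_, ?_⟩⟩
  · calc (max (longTimeLogKernel n r₁) (longTimeLogKernel n r₀)⁻¹)⁻¹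
        ≤ (longTimeLogKernel n r₀)⁻¹⁻¹ := inv_anti₀ (inv_pos.2 hK₀) (le_max_right _ _)
      _ = longTimeLogKernel n r₀ := inv_inv _
      _ ≤ longTimeLogKernel n r := hmin ⟨hr.le, hr1⟩
  · exact (hmax ⟨hr.le, hr1⟩).trans (le_max_left _ _)
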